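/- arXiv:2511.07318 — 2 statements merged into one kernel-verified Lean document; each statement's English description precedes it below -/
import Mathlib

section
/- Let X be a compact metric space equipped with a probability measure μ that is d-Ahlfors lower regular, i.e., there exists ω > 0 with μ(B(x,r)) ≥ ω r^d for all x ∈ X and 0 < r ≤ diam(X). Let X_N = {x_1, …, x_N} be N i.i.d. samples from μ and let h_N = sup_{x∈X} min_i ‖x − x_i‖ be the fill distance. Then there exists a constant C_3 > 0 depending only on d and ω such that for all t ∈ (0, diam(X)), P(h_N > t) ≤ (C_3 t^d)^{-1} exp(−C_3 t^d N). -/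
/-!
Take a maximal `t/2`-separated set `Y`; it is a `t/2`-cover, and the closed balls of radius `t/4`
around its points are disjoint, each of mass at least `p = ω (t/4)^d`, so `#Y ≤ 1/p`. If the fill
distance exceeds `t`, some `y ∈ Y` has no sample in `closedBall y (t/2)`; for a fixed `y` this
happens with probability at most `(1 - p)^N ≤ exp (-p N)`, and a union bound over `Y` concludes.
-/

open MeasureTheory Metric ProbabilityTheory Set
open scoped ENNReal NNReal

namespace Metric

variable {X : Type*}

theorem packingNumber_ne_top_of_isCompact [PseudoEMetricSpace X] {ε : ℝ≥0} {A : Set X}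
    (hε : ε ≠ 0) (hA : IsCompact A) : packingNumber ε A ≠ ⊤ := by
  obtain ⟨N, -, hN_fin, hN⟩ := exists_finite_isCover_of_isCompact (ε := ε / 2) (by simpa) hA
  have h := (packingNumber_two_mul_le_externalCoveringNumber (ε / 2) A).trans
    hN.externalCoveringNumber_le_encard
  rw [mul_div_cancel₀ ε two_ne_zero] at h
  exact ne_top_of_le_ne_top hN_fin.encard_lt_top.ne h

theorem finite_maximalSeparatedSet [PseudoEMetricSpace X] {ε : ℝ≥0} {A : Set X}
    (h : packingNumber ε A ≠ ⊤) : (maximalSeparatedSet ε A).Finite :=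
  Set.encard_ne_top_iff.mp (encard_maximalSeparatedSet h ▸ h)

theorem IsSeparated.card_mul_le_measure_univ [PseudoMetricSpace X] [MeasurableSpace X]
    [OpensMeasurableSpace X] {μ : Measure X} {ε : ℝ≥0} {m : ℝ≥0∞} {C : Finset X}
    (hC : IsSeparated ε (C : Set X)) (hm : ∀ x ∈ C, m ≤ μ (closedBall x (ε / 2))) :
    C.card * m ≤ μ univ := by
  have hdisj : (C : Set X).PairwiseDisjoint (fun x => closedBall x (ε / 2)) := by
    intro x hx y hy hxy
    have hsep : (ε : ℝ≥0∞) < edist x y := hC hx hy hxy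
    rw [edist_dist, ← ENNReal.ofReal_coe_nnreal,
      ENNReal.ofReal_lt_ofReal_iff_of_nonneg ε.coe_nonneg] at hsep
    exact closedBall_disjoint_closedBall (by linarith)
  calc C.card * m = C.card • m := (nsmul_eq_mul _ _).symm
    _ ≤ ∑ x ∈ C, μ (closedBall x (ε / 2)) := Finset.card_nsmul_le_sum _ _ _ hm
    _ = μ (⋃ x ∈ C, closedBall x (ε / 2)) :=
      (measure_biUnion_finset hdisj fun _ _ => measurableSet_closedBall).symm
    _ ≤ μ univ := measure_mono (subset_univ _)

theorem setOf_lt_iSup_iInf_dist_subset {Ω ι : Type*} [PseudoMetricSpace X] [Finite ι]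
    {Xs : ι → Ω → X} {N : Set X} {ε : ℝ≥0} (hN : IsCover ε univ N) {t : ℝ} (ht : 0 ≤ t) :
    {ω | t < ⨆ x, ⨅ i, dist x (Xs i ω)} ⊆ ⋃ y ∈ N, ⋂ i, Xs i ⁻¹' (closedBall y (t - ε))ᶜ := by
  rintro ω (hω : t < ⨆ x, ⨅ i, dist x (Xs i ω))
  cases isEmpty_or_nonempty X
  · rw [Real.iSup_of_isEmpty] at hω
    exact absurd ht hω.not_ge
  obtain ⟨x, hx⟩ := exists_lt_of_lt_ciSup hω
  obtain ⟨y, hyN, hxy⟩ := mem_iUnion₂.mp (hN.subset_iUnion_closedBall (mem_univ x))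
  refine mem_biUnion hyN (mem_iInter.mpr fun i => ?_)
  have hxi : t < dist x (Xs i ω) := hx.trans_le (ciInf_le (finite_range _).bddBelow i)
  rw [mem_closedBall] at hxy
  simp only [mem_preimage, mem_compl_iff, mem_closedBall, not_le]
  linarith [dist_triangle x y (Xs i ω), dist_comm (Xs i ω) y]

end Metric

theorem ProbabilityTheory.iIndepFun.measure_iInter_preimage_eq_pow {Ω X ι : Type*} [Fintype ι]
    {mΩ : MeasurableSpace Ω} {mX : MeasurableSpace X} {P : Measure Ω} {μ : Measure X}
    {Xs : ι → Ω → X} (hind : iIndepFun Xs P) (hmeas : ∀ i, Measurable (Xs i))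
    (hmap : ∀ i, P.map (Xs i) = μ) {s : Set X} (hs : MeasurableSet s) :
    P (⋂ i, Xs i ⁻¹' s) = μ s ^ Fintype.card ι := by
  rw [hind.meas_iInter fun i => ⟨s, hs, rfl⟩]
  simp_rw [← Measure.map_apply (hmeas _) hs, hmap, Finset.prod_const, Finset.card_univ]

theorem ProbabilityTheory.iIndepFun.measure_iInter_preimage_compl_le {Ω X ι : Type*} [Fintype ι]
    {mΩ : MeasurableSpace Ω} {mX : MeasurableSpace X} {P : Measure Ω} {μ : Measure X}
    [IsProbabilityMeasure μ] {Xs : ι → Ω → X} (hind : iIndepFun Xs P)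
    (hmeas : ∀ i, Measurable (Xs i)) (hmap : ∀ i, P.map (Xs i) = μ) {s : Set X}
    (hs : MeasurableSet s) {p : ℝ} (hp : ENNReal.ofReal p ≤ μ s) :
    P (⋂ i, Xs i ⁻¹' sᶜ) ≤ ENNReal.ofReal (Real.exp (-(p * Fintype.card ι))) := by
  have hcompl : μ sᶜ ≤ ENNReal.ofReal (1 - p) := by
    rw [prob_compl_eq_one_sub hs, tsub_le_iff_right]
    calc (1 : ℝ≥0∞) = ENNReal.ofReal (1 - p + p) := by simp
      _ ≤ ENNReal.ofReal (1 - p) + ENNReal.ofReal p := ENNReal.ofReal_add_le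
      _ ≤ ENNReal.ofReal (1 - p) + μ s := by gcongr
  calc P (⋂ i, Xs i ⁻¹' sᶜ) = μ sᶜ ^ Fintype.card ι :=
        hind.measure_iInter_preimage_eq_pow hmeas hmap hs.compl
    _ ≤ ENNReal.ofReal (Real.exp (-p)) ^ Fintype.card ι := by
        gcongr
        exact hcompl.trans (ENNReal.ofReal_le_ofReal (by linarith [Real.add_one_le_exp (-p)]))
    _ = ENNReal.ofReal (Real.exp (-(p * Fintype.card ι))) := by
        rw [← ENNReal.ofReal_pow (Real.exp_pos _).le, ← Real.exp_nat_mul, mul_neg, mul_comm]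

/-- Tail bound on the fill distance of i.i.d. samples from a `d`-Ahlfors lower regular
probability measure on a compact metric space: there is `C₃ > 0` depending only on `d`
and the regularity constant `ω` such that for `0 < t < diam X`,
`P(h_N > t) ≤ (C₃ t^d)⁻¹ exp(−C₃ t^d N)`. -/
theorem fill_distance_tail_bound (d : ℕ) (ω : ℝ) (hω : 0 < ω) :
    ∃ C₃ : ℝ, 0 < C₃ ∧
      ∀ (X : Type) (_ : MetricSpace X) (_ : CompactSpace X)
        (mX : MeasurableSpace X) (_ : BorelSpace X)
        (μ : Measure X) (_ : IsProbabilityMeasure μ),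
        (∀ x : X, ∀ r : ℝ, 0 < r → r ≤ diam (Set.univ : Set X) →
          ENNReal.ofReal (ω * r ^ d) ≤ μ (closedBall x r)) →
        ∀ (N : ℕ) (Ω : Type) (_ : MeasureSpace Ω) (_ : IsProbabilityMeasure (ℙ : Measure Ω))
          (Xs : Fin N → Ω → X),
          (∀ i, Measurable (Xs i)) →
          iIndepFun (m := fun _ => mX) Xs ℙ →
          (∀ i, Measure.map (Xs i) ℙ = μ) →
          ∀ t : ℝ, 0 < t → t < diam (Set.univ : Set X) →
            ℙ {ωp : Ω | (⨆ x : X, ⨅ i : Fin N, dist x (Xs i ωp)) > t} ≤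
              ENNReal.ofReal ((C₃ * t ^ d)⁻¹ * Real.exp (-(C₃ * t ^ d * N))) := by
  refine ⟨ω / 4 ^ d, by positivity, ?_⟩
  intro X _ _ mX _ μ _ hreg N Ω _ _ Xs hmeas hindep hmap t ht htd
  set p := ω / 4 ^ d * t ^ d with hp_def
  have hp : 0 < p := by positivity
  have hball : ∀ x r, t / 4 ≤ r → ENNReal.ofReal p ≤ μ (closedBall x r) := fun x r hr =>
    calc ENNReal.ofReal p = ENNReal.ofReal (ω * (t / 4) ^ d) := by
          rw [hp_def, div_pow]; congr 1; ring
      _ ≤ μ (closedBall x (t / 4)) := hreg x _ (by positivity) (by linarith)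
      _ ≤ μ (closedBall x r) := measure_mono (closedBall_subset_closedBall hr)
  set ε := (t / 2).toNNReal
  have hε : (ε : ℝ) = t / 2 := Real.coe_toNNReal _ (by positivity)
  have hpack := packingNumber_ne_top_of_isCompact (ε := ε) (by simpa [ε])
    (isCompact_univ (X := X))
  set Y := (finite_maximalSeparatedSet hpack).toFinset
  have hY : (Y.card : ℝ≥0∞) ≤ ENNReal.ofReal p⁻¹ := by
    rw [ENNReal.ofReal_inv_of_pos hp, ENNReal.le_inv_iff_mul_le, ← measure_univ (μ := μ)]
    exact IsSeparated.card_mul_le_measure_univ (by simpa [Y] using isSeparated_maximalSeparatedSet)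
      fun x _ => hball x _ (by rw [hε]; linarith)
  calc ℙ {ωp : Ω | (⨆ x : X, ⨅ i : Fin N, dist x (Xs i ωp)) > t}
      ≤ ℙ (⋃ y ∈ Y, ⋂ i, Xs i ⁻¹' (closedBall y (t - ε))ᶜ) := measure_mono <| by
        simpa [Y] using setOf_lt_iSup_iInf_dist_subset (isCover_maximalSeparatedSet hpack) ht.le
    _ ≤ Y.card * ENNReal.ofReal (Real.exp (-(p * N))) := by
        rw [← nsmul_eq_mul]
        refine (measure_biUnion_finset_le _ _).trans (Finset.sum_le_card_nsmul _ _ _ fun y _ => ?_)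
        simpa using hindep.measure_iInter_preimage_compl_le hmeas hmap measurableSet_closedBall
          (hball y _ (by rw [hε]; linarith))
    _ ≤ ENNReal.ofReal p⁻¹ * ENNReal.ofReal (Real.exp (-(p * N))) := by gcongr
    _ = ENNReal.ofReal (p⁻¹ * Real.exp (-(p * N))) := (ENNReal.ofReal_mul (by positivity)).symm
end

section
/- Under the setup of the previous tail bound, for any δ ∈ (0,1) and any N with N > δ·e, with probability at least 1 − δ, the fill distance of N i.i.d. uniform samples satisfies h_N ≤ (ln(N/δ) / (C_3 N))^{1/d}, where C_3 > 0 depends only on d. -/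
/-!
Take a maximal `2r`-separated subset `M` of the sphere. The balls of radius `r` about its points
are disjoint, and each carries uniform probability at least `p ≍ r^d`: orthogonal projection onto
the tangent hyperplane is 1-Lipschitz and maps the cap onto a set containing a `d`-ball of radius
`r / 2`. Hence `#M ≤ 1 / p`. If each of these balls contains a sample, the fill distance is at
most `3r`; by independence and a union bound this fails with probability at most
`#M (1 - p)^N ≤ e^{-pN} / p`. Choosing `pN = log (N / δ)` turns this into
`δ / log (N / δ) ≤ δ`, since `N > δe`.
-/

open MeasureTheory Metric ProbabilityTheory Module Real
open scoped NNReal ENNReal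

section FillDistance

variable {α ι : Type*} [PseudoMetricSpace α]

noncomputable def fillDistance (S : Set α) (x : ι → α) : ℝ :=
  ⨆ p : S, ⨅ i, dist (p : α) (x i)

theorem fillDistance_le {S : Set α} {x : ι → α} {t : ℝ} (ht : 0 ≤ t)
    (h : ∀ p ∈ S, ∃ i, dist p (x i) ≤ t) : fillDistance S x ≤ t := by
  refine Real.iSup_le (fun p ↦ ?_) ht
  obtain ⟨i, hi⟩ := h p p.2
  exact (ciInf_le ⟨0, by rintro _ ⟨j, rfl⟩; exact dist_nonneg⟩ i).trans hi

theorem fillDistance_le_of_isCover {S M : Set α} {x : ι → α} {r : ℝ≥0}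
    (hM : IsCover (2 * r) S M) (hx : ∀ y ∈ M, ∃ i, x i ∈ ball y r) :
    fillDistance S x ≤ 3 * r := by
  refine fillDistance_le (by positivity) fun p hp ↦ ?_
  obtain ⟨y, hy, hpy⟩ := hM hp
  obtain ⟨i, hi⟩ := hx y hy
  have hpy' : dist p y ≤ 2 * r := by exact_mod_cast edist_le_coe.mp hpy
  exact ⟨i, (dist_triangle_right p (x i) y).trans (by linarith [mem_ball.mp hi])⟩

end FillDistance

section Packing

variable {α : Type*} [PseudoMetricSpace α] [MeasurableSpace α] [OpensMeasurableSpace α]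

theorem card_mul_le_one_of_isSeparated (ν : Measure α) [IsProbabilityMeasure ν] {r : ℝ≥0}
    {p : ℝ} {s : Finset α} (hs : IsSeparated (2 * r : ℝ≥0) (s : Set α))
    (hp : ∀ y ∈ s, ENNReal.ofReal p ≤ ν (ball y r)) : s.card * p ≤ 1 := by
  rcases lt_or_ge p 0 with hp0 | hp0
  · nlinarith [Nat.cast_nonneg (α := ℝ) s.card]
  have hdisj : (s : Set α).PairwiseDisjoint (fun y ↦ ball y r) := fun y hy z hz hyz ↦ by
    have : ((2 * r : ℝ≥0) : ℝ≥0∞) < edist y z := hs hy hz hyz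
    rw [edist_dist, ← ENNReal.ofReal_coe_nnreal, ENNReal.ofReal_lt_ofReal_iff_of_nonneg
      (by positivity)] at this
    exact ball_disjoint_ball (by push_cast at this; linarith)
  rw [← ENNReal.ofReal_le_one, ENNReal.ofReal_mul (Nat.cast_nonneg _), ENNReal.ofReal_natCast]
  calc (s.card : ℝ≥0∞) * ENNReal.ofReal p = ∑ _y ∈ s, ENNReal.ofReal p := by simp
    _ ≤ ∑ y ∈ s, ν (ball y r) := Finset.sum_le_sum hp
    _ = ν (⋃ y ∈ s, ball y r) :=
        (measure_biUnion_finset hdisj fun _ _ ↦ measurableSet_ball).symm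
    _ ≤ 1 := prob_le_one

theorem packingNumber_ne_top_of_le_measure_ball (ν : Measure α) [IsProbabilityMeasure ν]
    {S : Set α} {r : ℝ≥0} {p : ℝ} (hp : 0 < p)
    (hcap : ∀ y ∈ S, ENNReal.ofReal p ≤ ν (ball y r)) : packingNumber (2 * r) S ≠ ⊤ := by
  refine ne_top_of_le_ne_top (ENat.natCast_ne_top ⌊1 / p⌋₊) ?_
  refine iSup_le fun C ↦ iSup_le fun hCS ↦ iSup_le fun hC ↦ ?_
  by_contra! hlt
  obtain ⟨t, htC, ht⟩ := Set.exists_subset_encard_eq (Order.add_one_le_of_lt hlt)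
  have htfin : t.Finite := Set.encard_ne_top_iff.mp (by simp [ht])
  have hcard : (htfin.toFinset.card : ℝ) = ⌊1 / p⌋₊ + 1 := by
    rw [htfin.encard_eq_coe_toFinset_card] at ht
    exact_mod_cast ht
  have := card_mul_le_one_of_isSeparated ν (s := htfin.toFinset) (by simpa using hC.subset htC)
    fun y hy ↦ hcap y (hCS (htC (by simpa using hy)))
  rw [hcard, ← le_div_iff₀ hp] at this
  exact (Nat.lt_floor_add_one (1 / p)).not_ge this

end Packing

theorem ofReal_one_sub_le_prob_of_prob_compl_le {Ω : Type*} [MeasurableSpace Ω]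
    {μ : Measure Ω} [IsProbabilityMeasure μ] {s : Set Ω} {δ : ℝ} (hδ : 0 ≤ δ)
    (h : μ sᶜ ≤ ENNReal.ofReal δ) : ENNReal.ofReal (1 - δ) ≤ μ s := by
  rw [ENNReal.ofReal_sub 1 hδ, ENNReal.ofReal_one, tsub_le_iff_right]
  calc 1 = μ (s ∪ sᶜ) := by rw [Set.union_compl_self, measure_univ]
    _ ≤ μ s + μ sᶜ := measure_union_le _ _
    _ ≤ μ s + ENNReal.ofReal δ := by gcongr

theorem ENNReal.one_sub_ofReal_pow_le {p : ℝ} (hp : 0 ≤ p) (n : ℕ) :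
    (1 - ENNReal.ofReal p) ^ n ≤ ENNReal.ofReal (exp (-(p * n))) := by
  calc (1 - ENNReal.ofReal p) ^ n ≤ ENNReal.ofReal (exp (-p)) ^ n := by
        gcongr
        rw [← ENNReal.ofReal_one, ← ENNReal.ofReal_sub _ hp]
        exact ENNReal.ofReal_le_ofReal (by linarith [add_one_le_exp (-p)])
    _ = ENNReal.ofReal (exp (-(p * n))) := by
        rw [← ENNReal.ofReal_pow (exp_pos _).le, ← exp_nat_mul]
        ring_nf

theorem measure_biUnion_iInter_preimage_compl_le {Ω α ι κ : Type*} [MeasurableSpace Ω]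
    {P : Measure Ω} [IsProbabilityMeasure P] [MeasurableSpace α] [Fintype ι]
    {X : ι → Ω → α} (hX : ∀ i, Measurable (X i)) (hind : iIndepFun X P) (T : Finset κ)
    {B : κ → Set α} (hB : ∀ k ∈ T, MeasurableSet (B k)) {q : ℝ≥0∞}
    (hq : ∀ i, ∀ k ∈ T, q ≤ P (X i ⁻¹' B k)) :
    P (⋃ k ∈ T, ⋂ i, X i ⁻¹' (B k)ᶜ) ≤ T.card * (1 - q) ^ Fintype.card ι := by
  calc P (⋃ k ∈ T, ⋂ i, X i ⁻¹' (B k)ᶜ)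
      ≤ ∑ k ∈ T, P (⋂ i, X i ⁻¹' (B k)ᶜ) := measure_biUnion_finset_le T _
    _ ≤ ∑ _k ∈ T, (1 - q) ^ Fintype.card ι := Finset.sum_le_sum fun k hk ↦ by
        rw [hind.meas_iInter fun i ↦ ⟨(B k)ᶜ, (hB k hk).compl, rfl⟩, ← Finset.card_univ,
          ← Finset.prod_const]
        refine Finset.prod_le_prod' fun i _ ↦ ?_
        rw [Set.preimage_compl, prob_compl_eq_one_sub (hX i (hB k hk))]
        exact tsub_le_tsub_left (hq i k hk) 1
    _ = T.card * (1 - q) ^ Fintype.card ι := by simp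

section TailBound

variable {Ω α ι : Type*} [MeasurableSpace Ω] {P : Measure Ω} [IsProbabilityMeasure P]
  [PseudoMetricSpace α] [MeasurableSpace α] [OpensMeasurableSpace α] [Fintype ι]

theorem measure_lt_fillDistance_le {X : ι → Ω → α} (hX : ∀ i, Measurable (X i))
    (hind : iIndepFun X P) {ν : Measure α} [IsProbabilityMeasure ν]
    (hlaw : ∀ i, P.map (X i) = ν) {S : Set α} {r p : ℝ} (hr : 0 ≤ r) (hp : 0 < p)
    (hcap : ∀ y ∈ S, ENNReal.ofReal p ≤ ν (ball y r)) :
    P {ω | 3 * r < fillDistance S (fun i ↦ X i ω)} ≤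
      ENNReal.ofReal (exp (-(p * Fintype.card ι)) / p) := by
  lift r to ℝ≥0 using hr
  have hpack := packingNumber_ne_top_of_le_measure_ball ν hp hcap
  have hfin : (maximalSeparatedSet (2 * r) S).Finite :=
    Set.encard_ne_top_iff.mp (by rwa [encard_maximalSeparatedSet hpack])
  set T := hfin.toFinset
  have hcard : T.card * p ≤ 1 := card_mul_le_one_of_isSeparated ν
    (by rw [Set.Finite.coe_toFinset]; exact isSeparated_maximalSeparatedSet)
    fun y hy ↦ hcap y (maximalSeparatedSet_subset (by simpa [T] using hy))
  have hsub : {ω | 3 * r < fillDistance S (fun i ↦ X i ω)} ⊆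
      ⋃ y ∈ T, ⋂ i, X i ⁻¹' (ball y r)ᶜ := by
    intro ω hω
    by_contra hhit
    simp only [Set.mem_iUnion, Set.mem_iInter, Set.mem_preimage, Set.mem_compl_iff, not_exists,
      not_forall, not_not] at hhit
    exact hω.not_ge (fillDistance_le_of_isCover (isCover_maximalSeparatedSet hpack)
      fun y hy ↦ hhit y (by simpa [T] using hy))
  calc P {ω | 3 * r < fillDistance S (fun i ↦ X i ω)}
      ≤ P (⋃ y ∈ T, ⋂ i, X i ⁻¹' (ball y r)ᶜ) := measure_mono hsub
    _ ≤ T.card * (1 - ENNReal.ofReal p) ^ Fintype.card ι :=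
        measure_biUnion_iInter_preimage_compl_le hX hind T (fun _ _ ↦ measurableSet_ball)
          fun i y hy ↦ by
            rw [← Measure.map_apply (hX i) measurableSet_ball, hlaw i]
            exact hcap y (maximalSeparatedSet_subset (by simpa [T] using hy))
    _ ≤ ENNReal.ofReal (1 / p) * ENNReal.ofReal (exp (-(p * Fintype.card ι))) := by
        gcongr
        · rw [← ENNReal.ofReal_natCast]
          exact ENNReal.ofReal_le_ofReal ((le_div_iff₀ hp).mpr hcard)
        · exact ENNReal.one_sub_ofReal_pow_le hp.le _
    _ = ENNReal.ofReal (exp (-(p * Fintype.card ι)) / p) := by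
        rw [← ENNReal.ofReal_mul (by positivity)]
        ring_nf

end TailBound

section Cap

theorem volume_le_hausdorffMeasure_finrank {F : Type*} [NormedAddCommGroup F]
    [InnerProductSpace ℝ F] [FiniteDimensional ℝ F] [MeasurableSpace F] [BorelSpace F]
    (s : Set F) : volume s ≤ μH[finrank ℝ F] s := by
  -- `μH` agrees with `volume` for the sup metric on coordinates, which is below the Euclidean one
  let b := stdOrthonormalBasis ℝ F
  let f : F ≃ᵐ (Fin (finrank ℝ F) → ℝ) :=
    b.measurableEquiv.trans (MeasurableEquiv.toLp 2 _).symm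
  have hf : MeasurePreserving f volume volume := b.measurePreserving_measurableEquiv.trans
    (EuclideanSpace.volume_preserving_symm_measurableEquiv_toLp _)
  have hlip : LipschitzWith 1 f := by
    have := (PiLp.lipschitzWith_ofLp 2 fun _ : Fin (finrank ℝ F) ↦ ℝ).comp
      b.repr.isometry.lipschitz
    rwa [mul_one] at this
  have hpi : (μH[finrank ℝ F] : Measure (Fin (finrank ℝ F) → ℝ)) = volume := by
    simpa using hausdorffMeasure_pi_real (ι := Fin (finrank ℝ F))
  calc volume s = volume (f '' s) := by rw [← hf.map_eq, f.map_apply, f.preimage_image]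
    _ = μH[finrank ℝ F] (f '' s) := by rw [hpi]
    _ ≤ μH[finrank ℝ F] s := by
        simpa using hlip.hausdorffMeasure_image_le (Nat.cast_nonneg _) s

variable {E : Type*} [NormedAddCommGroup E] [InnerProductSpace ℝ E]

theorem ball_subset_orthogonalProjectionOnto_image_ball_inter_sphere {y : E} (hy : ‖y‖ = 1)
    {ρ : ℝ} (hρ : ρ ≤ 2) :
    ball (0 : (ℝ ∙ y)ᗮ) (ρ / 2) ⊆
      (ℝ ∙ y)ᗮ.orthogonalProjectionOnto '' (ball y ρ ∩ sphere 0 1) := by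
  intro v hv
  rw [mem_ball_zero_iff] at hv
  have hv1 : ‖v‖ ^ 2 ≤ 1 := by nlinarith [norm_nonneg v]
  have hvy : inner ℝ (v : E) y = 0 := Submodule.mem_orthogonal_singleton_iff_inner_left.mp v.2
  set s := √(1 - ‖v‖ ^ 2)
  have hs : s ^ 2 = 1 - ‖v‖ ^ 2 := sq_sqrt (by linarith)
  have hs1 : s ≤ 1 := sqrt_le_one.mpr (by nlinarith [norm_nonneg v])
  have hpyth : ∀ c : ℝ, ‖(v : E) + c • y‖ ^ 2 = ‖v‖ ^ 2 + c ^ 2 := fun c ↦ by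
    rw [sq, norm_add_sq_eq_norm_sq_add_norm_sq_real (by simp [inner_smul_right, hvy]),
      norm_smul, hy, Real.norm_eq_abs]
    simp [sq]
  refine ⟨v + s • y, ⟨?_, ?_⟩, ?_⟩
  · rw [mem_ball, dist_eq_norm, show (v : E) + s • y - y = v + (s - 1) • y by module]
    -- `(1 - s)² ≤ 1 - s² = ‖v‖²` as `0 ≤ s ≤ 1`, so the lift is within `√2 ‖v‖ < ρ` of `y`
    refine lt_of_pow_lt_pow_left₀ 2 (by linarith [norm_nonneg v]) ?_
    rw [hpyth]
    nlinarith [sqrt_nonneg (1 - ‖v‖ ^ 2), norm_nonneg v]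
  · rw [mem_sphere_zero_iff_norm, ← sq_eq_sq₀ (norm_nonneg _) zero_le_one, hpyth, hs]
    ring
  · simp [Submodule.orthogonalProjectionOnto_mem_subspace_eq_self,
      Submodule.orthogonalProjectionOnto_orthogonalComplement_singleton_eq_zero]

theorem le_hausdorffMeasure_ball_inter_sphere [MeasurableSpace E] [BorelSpace E] {d : ℕ}
    (hE : finrank ℝ E = d + 1) (hd : 0 < d) {y : E} (hy : ‖y‖ = 1) {ρ : ℝ}
    (hρ : ρ ≤ 2) :
    ENNReal.ofReal (ρ / 2) ^ d * ENNReal.ofReal (√π ^ d / Gamma (d / 2 + 1)) ≤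
      μH[d] (ball y ρ ∩ sphere 0 1) := by
  have : Fact (finrank ℝ E = d + 1) := ⟨hE⟩
  have : FiniteDimensional ℝ E := .of_fact_finrank_eq_succ d
  have hK : finrank ℝ (ℝ ∙ y)ᗮ = d :=
    Submodule.finrank_orthogonal_span_singleton (norm_ne_zero_iff.mp (by simp [hy]))
  have : Nontrivial (ℝ ∙ y)ᗮ := Module.nontrivial_of_finrank_pos (hK ▸ hd)
  calc ENNReal.ofReal (ρ / 2) ^ d * ENNReal.ofReal (√π ^ d / Gamma (d / 2 + 1))
      = volume (ball (0 : (ℝ ∙ y)ᗮ) (ρ / 2)) := by rw [InnerProductSpace.volume_ball, hK]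
    _ ≤ μH[d] (ball (0 : (ℝ ∙ y)ᗮ) (ρ / 2)) := hK ▸ volume_le_hausdorffMeasure_finrank _
    _ ≤ μH[d] ((ℝ ∙ y)ᗮ.orthogonalProjectionOnto '' (ball y ρ ∩ sphere 0 1)) :=
        measure_mono (ball_subset_orthogonalProjectionOnto_image_ball_inter_sphere hy hρ)
    _ ≤ μH[d] (ball y ρ ∩ sphere 0 1) := by
        simpa using (ℝ ∙ y)ᗮ.lipschitzWith_orthogonalProjectionOnto.hausdorffMeasure_image_le
          (Nat.cast_nonneg d) (ball y ρ ∩ sphere 0 1)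

end Cap

section Sphere

variable (d : ℕ)

noncomputable def sphereUniform : Measure (EuclideanSpace ℝ (Fin (d + 1))) :=
  (μH[d] (sphere (0 : EuclideanSpace ℝ (Fin (d + 1))) 1))⁻¹ •
    (μH[(d : ℝ)]).restrict (sphere (0 : EuclideanSpace ℝ (Fin (d + 1))) 1)

/-- `max 1` keeps the constant positive even where `toReal` returns the junk value `0` for an
infinite surface measure. -/
noncomputable def sphereCapConst : ℝ :=
  √π ^ d / Gamma (d / 2 + 1) /
    (2 ^ d * max 1 (μH[d] (sphere (0 : EuclideanSpace ℝ (Fin (d + 1))) 1)).toReal)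

theorem sphereCapConst_pos : 0 < sphereCapConst d := by
  unfold sphereCapConst; positivity

variable {d}

theorem sphereUniform_apply {A : Set (EuclideanSpace ℝ (Fin (d + 1)))} (hA : MeasurableSet A) :
    sphereUniform d A =
      (μH[d] (sphere (0 : EuclideanSpace ℝ (Fin (d + 1))) 1))⁻¹ *
        μH[d] (A ∩ sphere (0 : EuclideanSpace ℝ (Fin (d + 1))) 1) := by
  rw [sphereUniform, Measure.smul_apply, smul_eq_mul, Measure.restrict_apply hA]

theorem ofReal_sphereCapConst_mul_le_sphereUniform_ball [IsProbabilityMeasure (sphereUniform d)]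
    (hd : 0 < d) {y : EuclideanSpace ℝ (Fin (d + 1))}
    (hy : y ∈ sphere (0 : EuclideanSpace ℝ (Fin (d + 1))) 1) {r : ℝ} (hr : 0 ≤ r)
    (hr2 : r ≤ 2) :
    ENNReal.ofReal (sphereCapConst d * r ^ d) ≤ sphereUniform d (ball y r) := by
  set μS := μH[d] (sphere (0 : EuclideanSpace ℝ (Fin (d + 1))) 1)
  have hμS : μS⁻¹ * μS = 1 := by
    have := measure_univ (μ := sphereUniform d)
    rwa [sphereUniform_apply MeasurableSet.univ, Set.univ_inter] at this
  have hμS0 : μS ≠ 0 := by rintro h; simp [h] at hμS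
  have hμStop : μS ≠ ⊤ := by rintro h; simp [h] at hμS
  have hμSpos : 0 < μS.toReal := ENNReal.toReal_pos hμS0 hμStop
  set a := (r / 2) ^ d * (√π ^ d / Gamma (d / 2 + 1))
  calc ENNReal.ofReal (sphereCapConst d * r ^ d)
      = ENNReal.ofReal (a / max 1 μS.toReal) := by
        unfold sphereCapConst a
        congr 1
        rw [div_pow]
        field_simp
        exact mul_comm _ _
    _ ≤ ENNReal.ofReal (a / μS.toReal) :=
        ENNReal.ofReal_le_ofReal (div_le_div_of_nonneg_left (by positivity) hμSpos
          (le_max_right _ _))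
    _ = μS⁻¹ * ENNReal.ofReal a := by
        rw [ENNReal.ofReal_div_of_pos hμSpos, ENNReal.ofReal_toReal hμStop,
          ENNReal.div_eq_inv_mul]
    _ ≤ μS⁻¹ * μH[d] (ball y r ∩ sphere (0 : EuclideanSpace ℝ (Fin (d + 1))) 1) := by
        gcongr
        rw [ENNReal.ofReal_mul (by positivity), ENNReal.ofReal_pow (by positivity)]
        exact le_hausdorffMeasure_ball_inter_sphere (finrank_euclideanSpace_fin) hd
          (by simpa using hy) hr2
    _ = sphereUniform d (ball y r) := (sphereUniform_apply measurableSet_ball).symm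

end Sphere

section SphereTail

variable {Ω ι : Type*} [MeasurableSpace Ω] {P : Measure Ω} [IsProbabilityMeasure P] [Fintype ι]
  [Nonempty ι] {d : ℕ}

theorem measure_lt_fillDistance_sphere_le (hd : 0 < d)
    {X : ι → Ω → EuclideanSpace ℝ (Fin (d + 1))} (hX : ∀ i, Measurable (X i))
    (hind : iIndepFun X P) (hlaw : ∀ i, P.map (X i) = sphereUniform d) {t : ℝ} (ht : 0 < t) :
    P {ω | t < fillDistance (sphere 0 1) (fun i ↦ X i ω)} ≤
      ENNReal.ofReal (exp (-(sphereCapConst d / 3 ^ d * t ^ d * Fintype.card ι)) /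
        (sphereCapConst d / 3 ^ d * t ^ d)) := by
  obtain ⟨i₀⟩ := ‹Nonempty ι›
  have : IsProbabilityMeasure (sphereUniform d) :=
    hlaw i₀ ▸ Measure.isProbabilityMeasure_map (hX i₀).aemeasurable
  rcases le_or_gt t 6 with ht6 | ht6
  · have key := measure_lt_fillDistance_le hX hind hlaw (r := t / 3) (by positivity)
      (by have := sphereCapConst_pos d; positivity)
      fun y hy ↦
        ofReal_sphereCapConst_mul_le_sphereUniform_ball hd hy (by positivity) (by linarith)
    have hCt : sphereCapConst d * (t / 3) ^ d = sphereCapConst d / 3 ^ d * t ^ d := by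
      rw [div_pow]; ring
    rwa [mul_div_cancel₀ t three_ne_zero, hCt] at key
  · -- the sphere has diameter `2 < t`, so only samples off the sphere can violate the bound
    refine le_of_eq_of_le ?_ zero_le
    refine measure_mono_null (t := X i₀ ⁻¹' (sphere 0 1)ᶜ) (fun ω hω ↦ ?_) ?_
    · by_contra hmem
      simp only [Set.mem_preimage, Set.mem_compl_iff, not_not] at hmem
      refine (show t < _ from hω).not_ge (fillDistance_le ht.le fun x hx ↦ ⟨i₀, ?_⟩)
      linarith [dist_triangle_right x (X i₀ ω) 0, mem_sphere.mp hx, mem_sphere.mp hmem]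
    · rw [← Measure.map_apply (hX i₀) isClosed_sphere.measurableSet.compl, hlaw i₀,
        sphereUniform_apply isClosed_sphere.measurableSet.compl, Set.compl_inter_self,
        measure_empty, mul_zero]

end SphereTail

theorem one_lt_log_div {δ N : ℝ} (hδ : 0 < δ) (hN : δ * exp 1 < N) : 1 < log (N / δ) := by
  have hNpos : 0 < N := lt_trans (by positivity) hN
  rwa [lt_log_iff_exp_lt (by positivity), lt_div_iff₀ hδ, mul_comm]

theorem exp_neg_log_div_div_le {δ N : ℝ} (hδ : 0 < δ) (hN : δ * exp 1 < N) :
    exp (-log (N / δ)) / (log (N / δ) / N) ≤ δ := by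
  have hNpos : 0 < N := lt_trans (by positivity) hN
  have hL := one_lt_log_div hδ hN
  calc exp (-log (N / δ)) / (log (N / δ) / N) = δ / log (N / δ) := by
        rw [exp_neg, exp_log (by positivity)]
        field_simp
    _ ≤ δ := div_le_self hδ.le hL.le

/-- High-probability fill-distance bound for i.i.d. uniform samples on the sphere:
there is `C₃ > 0` depending only on `d` such that for any `δ ∈ (0,1)` and `N > δ·e`,
with probability at least `1 − δ` the fill distance satisfies
`h_N ≤ (ln(N/δ) / (C₃ N))^{1/d}`. -/
theorem fill_distance_high_prob_bound (d : ℕ) (hd : 0 < d) :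
    ∃ C₃ : ℝ, 0 < C₃ ∧
      ∀ (δ : ℝ), 0 < δ → δ < 1 →
      ∀ (N : ℕ), δ * Real.exp 1 < N →
      ∀ (Ω : Type) (_ : MeasureSpace Ω) (_ : IsProbabilityMeasure (ℙ : Measure Ω))
        (Xs : Fin N → Ω → EuclideanSpace ℝ (Fin (d + 1))),
        (∀ i, Measurable (Xs i)) →
        iIndepFun Xs ℙ →
        (∀ i, Measure.map (Xs i) ℙ =
          (μH[d] (sphere (0 : EuclideanSpace ℝ (Fin (d + 1))) 1))⁻¹ •
            (μH[(d : ℝ)]).restrict (sphere (0 : EuclideanSpace ℝ (Fin (d + 1))) 1)) →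
        ENNReal.ofReal (1 - δ) ≤
          ℙ {ωp : Ω |
            (⨆ x : sphere (0 : EuclideanSpace ℝ (Fin (d + 1))) 1,
                ⨅ i : Fin N, dist (x : EuclideanSpace ℝ (Fin (d + 1))) (Xs i ωp)) ≤
              (Real.log (N / δ) / (C₃ * N)) ^ ((1 : ℝ) / d)} := by
  have hC : 0 < sphereCapConst d / 3 ^ d := by have := sphereCapConst_pos d; positivity
  refine ⟨sphereCapConst d / 3 ^ d, hC, fun δ hδ _ N hN Ω _ _ Xs hX hind hmap ↦ ?_⟩
  set C := sphereCapConst d / 3 ^ d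
  have hNpos : (0 : ℝ) < N := lt_trans (by positivity) hN
  have : Nonempty (Fin N) := ⟨⟨0, by exact_mod_cast hNpos⟩⟩
  have hL : 0 < log (N / δ) := one_pos.trans (one_lt_log_div hδ hN)
  set t := (log (N / δ) / (C * N)) ^ ((1 : ℝ) / d)
  have hCt : C * t ^ d = log (N / δ) / N := by
    have htd : t ^ d = log (N / δ) / (C * N) := by
      simp only [t, one_div]
      exact rpow_inv_natCast_pow (by positivity) hd.ne'
    rw [htd]
    field_simp
  have htail := measure_lt_fillDistance_sphere_le hd hX hind hmap (t := t) (by positivity)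
  rw [hCt, Fintype.card_fin, div_mul_cancel₀ _ hNpos.ne'] at htail
  refine ofReal_one_sub_le_prob_of_prob_compl_le hδ.le ?_
  simp only [Set.compl_ofPred, not_le]
  exact htail.trans (ENNReal.ofReal_le_ofReal (exp_neg_log_div_div_le hδ hN))
end
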